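/- arXiv:1807.00201 — 4 statements merged into one kernel-verified Lean document; each statement's English description precedes it below -/
import Mathlib

section
/- Let k ≥ 4 and n ≥ k. Every edge coloring of the complete graph K_n in which every k-element subset of vertices spans edges of at least (k choose 2) − ⌊k/2⌋ + 2 distinct colors has the property that each color appears on at most ⌊k/2⌋ − 1 edges; consequently the coloring uses at least (n choose 2)/(⌊k/2⌋ − 1) distinct colors in total. -/
/-!
If some color `c` appeared on `⌊k/2⌋` edges, those edges would span at most `k` vertices;
any `k`-set containing them sees at most `(k choose 2) - ⌊k/2⌋ + 1` colors, because its
`⌊k/2⌋` edges of color `c` contribute a single color. Hence every color class has at most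
`⌊k/2⌋ - 1` edges, and the `n choose 2` edges need at least `(n choose 2) / (⌊k/2⌋ - 1)`
colors.
-/

open Finset

/-- The set of colors appearing on edges (non-diagonal unordered pairs) with both
endpoints in `S`, for an edge coloring `col` of the complete graph on `Fin n`. -/
def colorsIn {n : ℕ} {α : Type} [DecidableEq α]
    (col : Sym2 (Fin n) → α) (S : Finset (Fin n)) : Finset α :=
  (S.sym2.filter (fun e => ¬ e.IsDiag)).image col

/-- The number of edges (non-diagonal unordered pairs) of `K_n` assigned color `c`. -/
def edgeCount {n : ℕ} {α : Type} [DecidableEq α]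
    (col : Sym2 (Fin n) → α) (c : α) : ℕ :=
  (Finset.univ.filter (fun e : Sym2 (Fin n) => ¬ e.IsDiag ∧ col e = c)).card

theorem Finset.card_image_add_card_le_of_forall_mem_eq {β γ : Type*} [DecidableEq β]
    [DecidableEq γ] {T E : Finset β} {f : β → γ} {c : γ} (hET : E ⊆ T)
    (hc : ∀ e ∈ E, f e = c) : #(T.image f) + #E ≤ #T + 1 := by
  have hsub : T.image f ⊆ insert c ((T \ E).image f) := by
    intro x hx
    obtain ⟨e, he, rfl⟩ := mem_image.1 hx
    by_cases heE : e ∈ E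
    · exact hc e heE ▸ mem_insert_self _ _
    · exact mem_insert_of_mem (mem_image_of_mem _ (mem_sdiff.2 ⟨he, heE⟩))
  have hcard : #(T.image f) ≤ #(T \ E) + 1 :=
    calc #(T.image f) ≤ #(insert c ((T \ E).image f)) := card_le_card hsub
      _ ≤ #((T \ E).image f) + 1 := card_insert_le _ _
      _ ≤ #(T \ E) + 1 := by gcongr; exact card_image_le
  have := card_sdiff_add_card_eq_card hET
  omega

section Sym2

variable {V : Type*} [DecidableEq V]

theorem Finset.card_sym2_filter_not_isDiag (S : Finset V) :
    #{e ∈ S.sym2 | ¬ e.IsDiag} = (#S).choose 2 := by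
  rw [sym2_eq_image, Sym2.filter_image_mk_not_isDiag, Sym2.card_image_offDiag]

theorem Finset.subset_sym2_biUnion_toFinset (E : Finset (Sym2 V)) :
    E ⊆ (E.biUnion Sym2.toFinset).sym2 := fun e he =>
  mem_sym2_iff.2 fun _ ha => mem_biUnion.2 ⟨e, he, Sym2.mem_toFinset.2 ha⟩

theorem Finset.card_biUnion_toFinset_le (E : Finset (Sym2 V)) :
    #(E.biUnion Sym2.toFinset) ≤ 2 * #E := by
  rw [mul_comm]
  refine card_biUnion_le_card_mul _ _ _ fun e _ => ?_
  rw [Sym2.card_toFinset]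
  split_ifs <;> omega

theorem Finset.exists_card_eq_subset_sym2 [Fintype V] (E : Finset (Sym2 V)) {k : ℕ}
    (hEk : 2 * #E ≤ k) (hk : k ≤ Fintype.card V) :
    ∃ S : Finset V, #S = k ∧ E ⊆ S.sym2 := by
  obtain ⟨S, hES, hS⟩ :=
    exists_superset_card_eq ((card_biUnion_toFinset_le E).trans hEk) hk
  exact ⟨S, hS, (subset_sym2_biUnion_toFinset E).trans (sym2_mono hES)⟩

end Sym2

section Coloring

variable {n : ℕ} {α : Type} [DecidableEq α] (col : Sym2 (Fin n) → α)

theorem exists_card_colorsIn_add_le {c : α} {m k : ℕ} (hm : m ≤ edgeCount col c)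
    (hmk : 2 * m ≤ k) (hk : k ≤ n) :
    ∃ S : Finset (Fin n), #S = k ∧ #(colorsIn col S) + m ≤ k.choose 2 + 1 := by
  obtain ⟨E, hE, rfl⟩ := exists_subset_card_eq hm
  obtain ⟨S, hS, hES⟩ := exists_card_eq_subset_sym2 E hmk (by simpa using hk)
  have hEc : ∀ e ∈ E, ¬ e.IsDiag ∧ col e = c := fun e he => (mem_filter.1 (hE he)).2
  refine ⟨S, hS, ?_⟩
  rw [← hS, ← card_sym2_filter_not_isDiag]
  exact card_image_add_card_le_of_forall_mem_eq
    (fun e he => mem_filter.2 ⟨hES he, (hEc e he).1⟩) fun e he => (hEc e he).2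

theorem edgeCount_le_of_forall_card_colorsIn {k : ℕ} (hk : k ≤ n)
    (hlocal : ∀ S : Finset (Fin n), #S = k → k.choose 2 - k / 2 + 2 ≤ #(colorsIn col S))
    (c : α) : edgeCount col c ≤ k / 2 - 1 := by
  by_contra! hc
  obtain ⟨S, hS, hcolors⟩ :=
    exists_card_colorsIn_add_le col (c := c) (m := k / 2) (by omega) (Nat.mul_div_le k 2) hk
  have := hlocal S hS
  omega

theorem choose_two_le_mul_card_colorsIn {m : ℕ} (hm : ∀ c, edgeCount col c ≤ m) :
    n.choose 2 ≤ m * #(colorsIn col univ) := by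
  have hedges := card_sym2_filter_not_isDiag (univ : Finset (Fin n))
  rw [card_univ, Fintype.card_fin] at hedges
  rw [← hedges]
  refine card_le_mul_card_image _ m fun c _ => le_trans (card_le_card fun e he => ?_) (hm c)
  simp only [mem_filter] at he ⊢
  exact ⟨mem_univ e, he.1.2, he.2⟩

end Coloring

/-- For `k ≥ 4` and `n ≥ k`, in every edge coloring of `K_n` in which every `k`-element
vertex subset spans at least `(k choose 2) - ⌊k/2⌋ + 2` colors, each color appears on at
most `⌊k/2⌋ - 1` edges, and consequently at least `(n choose 2) / (⌊k/2⌋ - 1)` colors are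
used in total. -/
theorem stmt5 (k n : ℕ) (hk : 4 ≤ k) (hn : k ≤ n) (α : Type) [DecidableEq α]
    (col : Sym2 (Fin n) → α)
    (hlocal : ∀ S : Finset (Fin n), S.card = k →
      k.choose 2 - k / 2 + 2 ≤ (colorsIn col S).card) :
    (∀ c : α, edgeCount col c ≤ k / 2 - 1) ∧
      ((n.choose 2 : ℝ) / ((k / 2 : ℕ) - 1 : ℝ) ≤ ((colorsIn col Finset.univ).card : ℝ)) := by
  have hcount := edgeCount_le_of_forall_card_colorsIn col hn hlocal
  refine ⟨hcount, ?_⟩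
  have hdenom : ((k / 2 : ℕ) - 1 : ℝ) = ((k / 2 - 1 : ℕ) : ℝ) := by
    rw [Nat.cast_sub (by omega), Nat.cast_one]
  rw [hdenom]
  refine div_le_of_le_mul₀ (by positivity) (by positivity) ?_
  exact_mod_cast (choose_two_le_mul_card_colorsIn col hcount).trans_eq (mul_comm _ _)
end

section
/- Let A be a set of n real numbers (n ≥ 4) such that every 4-element subset A' ⊆ A satisfies |D(A')| ≥ 5. Then every positive real number d is realized as a difference d = a − a' with a, a' ∈ A in at most two ways, and consequently |D(A)| ≥ (n choose 2)/2. -/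
/-!
If some `d > 0` were realized by three pairs `(b + d, b)`, the three `b`'s could not be pairwise
at distance `d` (three reals pairwise at distance `d` force `d = 0`), so two of them, `u` and `v`,
satisfy `|u - v| ≠ d`. Then `{u, u + d, v, v + d}` is a 4-subset of `A` all of whose positive
differences lie in `{|d|, |u - v|, |u - v + d|, |u - v - d|}`, against the hypothesis.
The bound on `|D(A)|` follows because the `(n choose 2)` pairs `a' < a` of `A` map onto `D(A)`
with fibres of size at most two.
-/

/-- The positive difference set of a set `A` of real numbers:
`D(A) = {a - a' : a, a' ∈ A, a > a'}`. -/
def posDiffSet (A : Set ℝ) : Set ℝ :=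
  {d : ℝ | ∃ a ∈ A, ∃ a' ∈ A, a' < a ∧ a - a' = d}

open Finset

lemma ncard_posDiffSet_le_four (u v d : ℝ) :
    (posDiffSet ↑({u, u + d, v, v + d} : Finset ℝ)).ncard ≤ 4 := by
  have hsub : posDiffSet ↑({u, u + d, v, v + d} : Finset ℝ) ⊆
      {|d|, |u - v|, |u - v + d|, |u - v - d|} := by
    rintro _ ⟨a, ha, a', ha', hlt, rfl⟩
    rw [← abs_of_pos (sub_pos.mpr hlt)]
    simp only [coe_insert, coe_singleton, Set.mem_insert_iff, Set.mem_singleton_iff] at ha ha'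
    simp only [Set.mem_insert_iff, Set.mem_singleton_iff, abs_eq_abs]
    rcases ha with h | h | h | h <;> rcases ha' with h' | h' | h' | h' <;> rw [h, h'] at hlt ⊢ <;>
      first
        | (exfalso; linarith)
        | (left; left; ring1) | (left; right; ring1)
        | (right; left; left; ring1) | (right; left; right; ring1)
        | (right; right; left; left; ring1) | (right; right; left; right; ring1)
        | (right; right; right; left; ring1) | (right; right; right; right; ring1)
  refine (Set.ncard_le_ncard hsub (Set.toFinite _)).trans ?_
  grw [Set.ncard_insert_le, Set.ncard_insert_le, Set.ncard_insert_le, Set.ncard_singleton]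

lemma eq_zero_of_pairwise_abs_sub_eq {x y z d : ℝ} (hxy : |x - y| = d) (hxz : |x - z| = d)
    (hyz : |y - z| = d) : d = 0 := by
  rcases abs_cases (x - y) with h₁ | h₁ <;> rcases abs_cases (x - z) with h₂ | h₂ <;>
    rcases abs_cases (y - z) with h₃ | h₃ <;> linarith

lemma Finset.card_product_filter_gt {α : Type*} [LinearOrder α] (s : Finset α) :
    #{x ∈ s ×ˢ s | x.2 < x.1} = (#s).choose 2 := by
  rw [← card_product_filter_lt]
  exact card_equiv (Equiv.prodComm α α) (by grind)

def diffReps (A : Finset ℝ) (d : ℝ) : Set (ℝ × ℝ) :=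
  {p | p.1 ∈ A ∧ p.2 ∈ A ∧ p.2 < p.1 ∧ p.1 - p.2 = d}

lemma abs_sub_eq_of_add_mem {A : Finset ℝ}
    (hlocal : ∀ A' ⊆ A, #A' = 4 → 5 ≤ (posDiffSet ↑A').ncard) {u v d : ℝ} (hd : 0 < d)
    (hu : u ∈ A) (hud : u + d ∈ A) (hv : v ∈ A) (hvd : v + d ∈ A) (huv : u ≠ v) :
    |u - v| = d := by
  by_contra hne
  rw [abs_eq hd.le, not_or] at hne
  have hcard : #({u, u + d, v, v + d} : Finset ℝ) = 4 := by
    rw [card_insert_of_notMem, card_insert_of_notMem, card_pair] <;> grind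
  have hsub : ({u, u + d, v, v + d} : Finset ℝ) ⊆ A := by
    simp only [insert_subset_iff, singleton_subset_iff]; exact ⟨hu, hud, hv, hvd⟩
  exact absurd ((hlocal _ hsub hcard).trans (ncard_posDiffSet_le_four u v d)) (by norm_num)

lemma ncard_diffReps_le_two {A : Finset ℝ}
    (hlocal : ∀ A' ⊆ A, #A' = 4 → 5 ≤ (posDiffSet ↑A').ncard) {d : ℝ} (hd : 0 < d) :
    (diffReps A d).ncard ≤ 2 := by
  have hfin : (diffReps A d).Finite :=
    (A ×ˢ A).finite_toSet.subset fun p hp => by simp [hp.1, hp.2.1]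
  have key : ∀ p ∈ diffReps A d, ∀ q ∈ diffReps A d, p ≠ q → |p.2 - q.2| = d := by
    rintro ⟨a, b⟩ ⟨ha, hb, -, hab⟩ ⟨a', b'⟩ ⟨ha', hb', -, hab'⟩ hne
    obtain rfl : a = b + d := by linarith
    obtain rfl : a' = b' + d := by linarith
    exact abs_sub_eq_of_add_mem hlocal hd hb ha hb' ha' fun h => hne (by rw [show b = b' from h])
  by_contra! h
  obtain ⟨p, hp, q, hq, r, hr, hpq, hpr, hqr⟩ := (Set.two_lt_ncard hfin).mp h
  exact hd.ne' (eq_zero_of_pairwise_abs_sub_eq (key p hp q hq hpq) (key p hp r hr hpr)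
    (key q hq r hr hqr))

lemma choose_two_le_mul_ncard_posDiffSet (A : Finset ℝ) (k : ℕ)
    (hk : ∀ d, 0 < d → (diffReps A d).ncard ≤ k) :
    (#A).choose 2 ≤ k * (posDiffSet ↑A).ncard := by
  classical
  set P := {x ∈ A ×ˢ A | x.2 < x.1}
  have hD : posDiffSet ↑A = ↑(P.image fun x => x.1 - x.2) := by
    ext d; simp [posDiffSet, P, and_assoc]
  have hfiber : ∀ d ∈ P.image (fun x => x.1 - x.2), #{x ∈ P | x.1 - x.2 = d} ≤ k := by
    intro d hd
    obtain ⟨x, hx, rfl⟩ := mem_image.mp hd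
    have hx := (mem_filter.mp hx).2
    have : (↑{y ∈ P | y.1 - y.2 = x.1 - x.2} : Set (ℝ × ℝ)) = diffReps A (x.1 - x.2) := by
      ext y; simp [P, diffReps, and_assoc]
    rw [← Set.ncard_coe_finset, this]
    exact hk _ (sub_pos.mpr hx)
  rw [hD, Set.ncard_coe_finset, ← card_product_filter_gt]
  exact card_le_mul_card_image P k hfiber

theorem stmt6_general (n : ℕ) (A : Finset ℝ) (hA : A.card = n)
    (hlocal : ∀ A' : Finset ℝ, A' ⊆ A → A'.card = 4 → 5 ≤ (posDiffSet ↑A').ncard) :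
    (∀ d : ℝ, 0 < d →
      {p : ℝ × ℝ | p.1 ∈ A ∧ p.2 ∈ A ∧ p.2 < p.1 ∧ p.1 - p.2 = d}.ncard ≤ 2) ∧
      ((n.choose 2 : ℝ) / 2 ≤ ((posDiffSet ↑A).ncard : ℝ)) := by
  have hreps : ∀ d : ℝ, 0 < d → (diffReps A d).ncard ≤ 2 := fun d hd =>
    ncard_diffReps_le_two hlocal hd
  refine ⟨hreps, ?_⟩
  have := choose_two_le_mul_ncard_posDiffSet A 2 hreps
  rw [hA] at this
  rw [div_le_iff₀ two_pos]
  exact_mod_cast this.trans_eq (mul_comm _ _)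

/-- Let `A` be a set of `n ≥ 4` reals such that every 4-element subset `A'` satisfies
`|D(A')| ≥ 5`. Then every positive real `d` is realized as a difference of elements of `A`
in at most two ways, and consequently `|D(A)| ≥ (n choose 2) / 2`. -/
theorem stmt6 (n : ℕ) (hn : 4 ≤ n) (A : Finset ℝ) (hA : A.card = n)
    (hlocal : ∀ A' : Finset ℝ, A' ⊆ A → A'.card = 4 → 5 ≤ (posDiffSet ↑A').ncard) :
    (∀ d : ℝ, 0 < d →
      {p : ℝ × ℝ | p.1 ∈ A ∧ p.2 ∈ A ∧ p.2 < p.1 ∧ p.1 - p.2 = d}.ncard ≤ 2) ∧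
      ((n.choose 2 : ℝ) / 2 ≤ ((posDiffSet ↑A).ncard : ℝ)) :=
  stmt6_general n A hA hlocal
end

section
/- Let a, b ≥ 2 be integers and n ≥ a(b+1). Let G be an edge coloring of K_n such that every a(b+1)-element subset of vertices spans edges of at least (a(b+1) choose 2) − ba + b + 1 distinct colors. Then for every vertex v and every color c, the number of vertices u with c(v,u) = c is at most b(a−1). -/
/-!
If `v` had `b(a-1) + 1` neighbours `u` with `c(v,u) = c`, then a set of `a(b+1)` vertices
containing `v` and these neighbours would contain `b(a-1) + 1` edges of one color, hence at most
`(a(b+1) choose 2) - b(a-1)` colors, one fewer than the local property demands.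
-/

open Finset

lemma Finset.card_image_add_card_le_of_forall_eq {β γ : Type*} [DecidableEq γ]
    {s t : Finset β} {f : β → γ} {c : γ} (hts : t ⊆ s) (hc : ∀ x ∈ t, f x = c) :
    #(s.image f) + #t ≤ #s + 1 := by
  classical
  have hsub : s.image f ⊆ insert c ((s \ t).image f) := by
    intro y hy
    obtain ⟨x, hx, rfl⟩ := mem_image.1 hy
    by_cases hxt : x ∈ t
    · simp [hc x hxt]
    · exact mem_insert_of_mem (mem_image_of_mem f (mem_sdiff.2 ⟨hx, hxt⟩))
  have hcard : #(s.image f) ≤ #(s \ t) + 1 :=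
    calc #(s.image f) ≤ #(insert c ((s \ t).image f)) := card_le_card hsub
      _ ≤ #((s \ t).image f) + 1 := card_insert_le _ _
      _ ≤ #(s \ t) + 1 := Nat.add_le_add_right card_image_le 1
  rw [card_sdiff_of_subset hts] at hcard
  have := card_le_card hts
  omega

lemma Finset.card_filter_not_isDiag_sym2 {β : Type*} [DecidableEq β] (s : Finset β) :
    #{e ∈ s.sym2 | ¬e.IsDiag} = (#s).choose 2 := by
  rw [sym2_eq_image, Sym2.filter_image_mk_not_isDiag, Sym2.card_image_offDiag]

lemma card_colorsIn_add_card_le {n : ℕ} {α : Type} [DecidableEq α]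
    {col : Sym2 (Fin n) → α} {S T : Finset (Fin n)} {v : Fin n} {c : α}
    (hvS : v ∈ S) (hTS : T ⊆ S) (hvT : v ∉ T) (hTc : ∀ u ∈ T, col s(v, u) = c) :
    #(colorsIn col S) + #T ≤ (#S).choose 2 + 1 := by
  have hstar : T.image (fun u => s(v, u)) ⊆ {e ∈ S.sym2 | ¬e.IsDiag} := by
    intro e he
    obtain ⟨u, hu, rfl⟩ := mem_image.1 he
    simp only [mem_filter, mk_mem_sym2_iff, Sym2.mk_isDiag_iff]
    exact ⟨⟨hvS, hTS hu⟩, fun h => hvT (h ▸ hu)⟩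
  have h := card_image_add_card_le_of_forall_eq hstar (f := col) (c := c)
    (by simpa only [forall_mem_image] using hTc)
  rwa [card_image_of_injective _ fun _ _ => Sym2.congr_right.1,
    card_filter_not_isDiag_sym2] at h

theorem stmt11_general (a b n : ℕ) (ha : 2 ≤ a) (hn : a * (b + 1) ≤ n)
    (α : Type) [DecidableEq α] (col : Sym2 (Fin n) → α)
    (hlocal : ∀ S : Finset (Fin n), S.card = a * (b + 1) →
      (a * (b + 1)).choose 2 - b * a + b + 1 ≤ (colorsIn col S).card) :
    ∀ (v : Fin n) (c : α),
      (Finset.univ.filter (fun u : Fin n => u ≠ v ∧ col s(v, u) = c)).card ≤ b * (a - 1) := by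
  intro v c
  by_contra! hmany
  obtain ⟨T, hTN, hT⟩ := exists_subset_card_eq hmany
  have hTv : ∀ u ∈ T, u ≠ v ∧ col s(v, u) = c := fun u hu => (mem_filter.1 (hTN hu)).2
  have hvT : v ∉ T := fun hv => (hTv v hv).1 rfl
  have hab : b * (a - 1) + b = b * a := by
    rw [← Nat.mul_succ, Nat.succ_eq_add_one, Nat.sub_add_cancel (by omega)]
  have hvT_card : #(insert v T) ≤ a * (b + 1) := by
    rw [card_insert_of_notMem hvT, hT, Nat.mul_succ, Nat.mul_comm a b]
    omega
  obtain ⟨S, hvTS, hS⟩ := exists_superset_card_eq hvT_card (by simpa using hn)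
  have hupper := card_colorsIn_add_card_le (col := col) (hvTS (mem_insert_self v T))
    ((subset_insert v T).trans hvTS) hvT fun u hu => (hTv u hu).2
  have hlower := hlocal S hS
  rw [hS, hT] at hupper
  omega

/-- Let `a, b ≥ 2` and `n ≥ a(b+1)`. In every edge coloring of `K_n` in which every
`a(b+1)`-element vertex subset spans at least `(a(b+1) choose 2) - ba + b + 1` distinct
colors, every vertex `v` and color `c` satisfy: the number of vertices `u` with
`c(v,u) = c` is at most `b(a-1)`. -/
theorem stmt11 (a b n : ℕ) (ha : 2 ≤ a) (hb : 2 ≤ b) (hn : a * (b + 1) ≤ n)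
    (α : Type) [DecidableEq α] (col : Sym2 (Fin n) → α)
    (hlocal : ∀ S : Finset (Fin n), S.card = a * (b + 1) →
      (a * (b + 1)).choose 2 - b * a + b + 1 ≤ (colorsIn col S).card) :
    ∀ (v : Fin n) (c : α),
      (Finset.univ.filter (fun u : Fin n => u ≠ v ∧ col s(v, u) = c)).card ≤ b * (a - 1) :=
  stmt11_general a b n ha hn α col hlocal
end

section
/- Let a, b ≥ 2 be integers and n ≥ a(b+1). Let G be an edge coloring of K_n such that every a(b+1)-element subset of vertices spans edges of at least (a(b+1) choose 2) − ba + b + 1 distinct colors. For a color c, let V_c denote the set of vertices incident to at least one edge of color c. Then for any b pairwise distinct colors c₁, …, c_b each appearing on at least a edges, we have |V_{c₁} ∩ V_{c₂} ∩ … ∩ V_{c_b}| < a. -/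
/-!
Suppose `a` vertices `A` lie in every `V_{cᵢ}`. For each colour `cᵢ` there are `a` edges of that
colour with at most `a` endpoints outside `A`: an edge of colour `cᵢ` meeting `A` has at most one
endpoint outside `A`, and if there are fewer than `a` such edges then, since they cover `A`, their
outside endpoints number at most `2m - a` for `m` of them, which leaves room for `a - m`
arbitrary further edges of colour `cᵢ`. Together with `A` these endpoints, padded to `a(b+1)`
vertices, span at least `ba` edges carrying only `b` colours, so they span at most
`(a(b+1) choose 2) - ba + b` colours.
-/

open Finset

/-- The set `V_c` of vertices incident to at least one edge of color `c`. -/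
def colorVerts {n : ℕ} {α : Type} [DecidableEq α]
    (col : Sym2 (Fin n) → α) (c : α) : Finset (Fin n) :=
  Finset.univ.filter (fun v : Fin n => ∃ u : Fin n, u ≠ v ∧ col s(v, u) = c)

section EdgesIn

variable {V : Type*} [DecidableEq V]

lemma Sym2.card_toFinset_sdiff_add_card_toFinset_inter {e : Sym2 V} (he : ¬ e.IsDiag)
    (A : Finset V) : #(e.toFinset \ A) + #(e.toFinset ∩ A) = 2 := by
  rw [card_sdiff_add_card_inter, Sym2.card_toFinset_of_not_isDiag e he]

def edgesIn (S : Finset V) : Finset (Sym2 V) := {e ∈ S.sym2 | ¬ e.IsDiag}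

lemma mem_edgesIn {S : Finset V} {e : Sym2 V} :
    e ∈ edgesIn S ↔ e.toFinset ⊆ S ∧ ¬ e.IsDiag := by
  simp only [edgesIn, mem_filter, mem_sym2_iff, subset_iff, Sym2.mem_toFinset]

lemma card_edgesIn (S : Finset V) : #(edgesIn S) = (#S).choose 2 := by
  rw [edgesIn, sym2_eq_image, Sym2.filter_image_mk_not_isDiag, Sym2.card_image_offDiag]

lemma edgesIn_mono {S T : Finset V} (h : S ⊆ T) : edgesIn S ⊆ edgesIn T :=
  filter_subset_filter _ (sym2_mono h)

lemma exists_subset_card_eq_sum_card_sdiff_le {E : Finset (Sym2 V)} (hE : ∀ e ∈ E, ¬ e.IsDiag)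
    {A : Finset V} (hAE : ∀ v ∈ A, ∃ e ∈ E, v ∈ e) (hcard : #A ≤ #E) :
    ∃ F ⊆ E, #F = #A ∧ ∑ e ∈ F, #(e.toFinset \ A) ≤ #A := by
  set M := {e ∈ E | ∃ v ∈ A, v ∈ e}
  have hM_cost : ∀ e ∈ M, #(e.toFinset \ A) ≤ 1 := by
    intro e he
    obtain ⟨he, v, hvA, hve⟩ := mem_filter.1 he
    have : 0 < #(e.toFinset ∩ A) := card_pos.2 ⟨v, mem_inter.2 ⟨Sym2.mem_toFinset.2 hve, hvA⟩⟩
    have := Sym2.card_toFinset_sdiff_add_card_toFinset_inter (hE e he) A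
    omega
  rcases le_or_gt #A #M with hAM | hMA
  · obtain ⟨F, hFM, hF⟩ := exists_subset_card_eq hAM
    refine ⟨F, hFM.trans (filter_subset _ _), hF, ?_⟩
    calc ∑ e ∈ F, #(e.toFinset \ A) ≤ ∑ _e ∈ F, 1 := sum_le_sum fun e he => hM_cost e (hFM he)
      _ = #A := by simp [hF]
  · have hcover : #A ≤ ∑ e ∈ M, #(e.toFinset ∩ A) := by
      refine (card_le_card fun v hv => ?_).trans card_biUnion_le
      obtain ⟨e, he, hve⟩ := hAE v hv
      exact mem_biUnion.2 ⟨e, mem_filter.2 ⟨he, v, hv, hve⟩,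
        mem_inter.2 ⟨Sym2.mem_toFinset.2 hve, hv⟩⟩
    have hsplit : ∑ e ∈ M, #(e.toFinset \ A) + ∑ e ∈ M, #(e.toFinset ∩ A) = 2 * #M := by
      rw [← sum_add_distrib, mul_comm, ← smul_eq_mul, ← sum_const]
      exact sum_congr rfl fun e he =>
        Sym2.card_toFinset_sdiff_add_card_toFinset_inter (hE e (mem_filter.1 he).1) A
    have hEM : #A - #M ≤ #(E \ M) := (Nat.sub_le_sub_right hcard _).trans (le_card_sdiff _ _)
    obtain ⟨G, hGE, hG⟩ := exists_subset_card_eq hEM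
    have hdisj : Disjoint M G := disjoint_of_subset_right hGE disjoint_sdiff
    have hG_cost : ∑ e ∈ G, #(e.toFinset \ A) ≤ #G * 2 :=
      sum_le_card_nsmul _ _ _ fun e he => by
        have := Sym2.card_toFinset_sdiff_add_card_toFinset_inter (hE e (mem_sdiff.1 (hGE he)).1) A
        omega
    refine ⟨M ∪ G, union_subset (filter_subset _ _) (hGE.trans sdiff_subset), ?_, ?_⟩
    · rw [card_union_of_disjoint hdisj]; omega
    · rw [sum_union hdisj]; omega

end EdgesIn

lemma sum_card_filter_eq_card_filter_mem_image {ι β γ : Type*} [Fintype ι] [DecidableEq γ]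
    {c : ι → γ} (hc : Function.Injective c) (s : Finset β) (f : β → γ) :
    ∑ i, #{x ∈ s | f x = c i} = #{x ∈ s | f x ∈ univ.image c} := by
  rw [card_eq_sum_card_fiberwise (s := {x ∈ s | f x ∈ univ.image c}) (t := univ.image c)
    fun x hx => (mem_filter.1 hx).2, sum_image hc.injOn]
  refine sum_congr rfl fun i _ => ?_
  rw [filter_filter]
  exact congrArg card (filter_congr fun x _ =>
    ⟨fun h => ⟨h ▸ mem_image_of_mem c (mem_univ i), h⟩, And.right⟩)

section Coloring

variable {n : ℕ} {α : Type} [DecidableEq α] (col : Sym2 (Fin n) → α)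

lemma card_colorsIn_add_card_filter_mem_le (S : Finset (Fin n)) (C : Finset α) :
    #(colorsIn col S) + #{e ∈ edgesIn S | col e ∈ C} ≤ (#S).choose 2 + #C := by
  have hsub : colorsIn col S ⊆ {e ∈ edgesIn S | col e ∉ C}.image col ∪ C := by
    intro x hx
    obtain ⟨e, he, rfl⟩ := mem_image.1 hx
    by_cases h : col e ∈ C
    · exact mem_union_right _ h
    · exact mem_union_left _ (mem_image_of_mem col (mem_filter.2 ⟨he, h⟩))
  have hsplit := card_filter_add_card_filter_not (s := edgesIn S) (fun e => col e ∈ C)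
  have := (card_le_card hsub).trans
    ((card_union_le _ _).trans (Nat.add_le_add_right card_image_le _))
  rw [card_edgesIn] at hsplit
  omega

lemma exists_card_le_and_le_card_filter_edgesIn (c : α) {A : Finset (Fin n)}
    (hA : A ⊆ colorVerts col c) (hcount : #A ≤ edgeCount col c) :
    ∃ T : Finset (Fin n), #T ≤ #A ∧ #A ≤ #{e ∈ edgesIn (A ∪ T) | col e = c} := by
  have hcover : ∀ v ∈ A, ∃ e ∈ ({e | ¬ e.IsDiag ∧ col e = c} : Finset _), v ∈ e := by
    intro v hv
    obtain ⟨u, hu, hcol⟩ := (mem_filter.1 (hA hv)).2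
    exact ⟨s(v, u), mem_filter.2 ⟨mem_univ _, Sym2.mk_isDiag_iff.not.2 hu.symm, hcol⟩,
      Sym2.mem_mk_left v u⟩
  obtain ⟨F, hFE, hF, hcost⟩ := exists_subset_card_eq_sum_card_sdiff_le
    (fun e he => (mem_filter.1 he).2.1) hcover hcount
  refine ⟨F.biUnion (·.toFinset \ A), card_biUnion_le.trans hcost, ?_⟩
  rw [← hF]
  refine card_le_card fun e he => ?_
  obtain ⟨-, hdiag, hcol⟩ := mem_filter.1 (hFE he)
  refine mem_filter.2 ⟨mem_edgesIn.2 ⟨fun v hv => ?_, hdiag⟩, hcol⟩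
  by_cases hvA : v ∈ A
  · exact mem_union_left _ hvA
  · exact mem_union_right _ (mem_biUnion.2 ⟨e, he, mem_sdiff.2 ⟨hv, hvA⟩⟩)

end Coloring

theorem stmt13_general (a b n : ℕ) (hn : a * (b + 1) ≤ n)
    (α : Type) [DecidableEq α] (col : Sym2 (Fin n) → α)
    (hlocal : ∀ S : Finset (Fin n), S.card = a * (b + 1) →
      (a * (b + 1)).choose 2 - b * a + b + 1 ≤ (colorsIn col S).card) :
    ∀ c : Fin b → α, Function.Injective c →
      (∀ i : Fin b, a ≤ edgeCount col (c i)) →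
      (Finset.univ.filter (fun v : Fin n => ∀ i : Fin b, v ∈ colorVerts col (c i))).card
        < a := by
  intro c hc hcount
  by_contra! h
  obtain ⟨A, hA, rfl⟩ := exists_subset_card_eq h
  choose T hT hTedges using fun i =>
    exists_card_le_and_le_card_filter_edgesIn col (c i)
      (fun v hv => (mem_filter.1 (hA hv)).2 i) (hcount i)
  have hS₀ : #(A ∪ univ.biUnion T) ≤ #A * (b + 1) := calc
    #(A ∪ univ.biUnion T) ≤ #A + ∑ i, #(T i) :=
      (card_union_le _ _).trans (Nat.add_le_add_left card_biUnion_le _)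
    _ ≤ #A + ∑ _i : Fin b, #A := Nat.add_le_add_left (sum_le_sum fun i _ => hT i) _
    _ = #A * (b + 1) := by rw [sum_const, card_univ, Fintype.card_fin, smul_eq_mul]; ring
  obtain ⟨S, hS₀S, -, hS⟩ := exists_subsuperset_card_eq (subset_univ _) hS₀ (by simpa using hn)
  have hmono : b * #A ≤ #{e ∈ edgesIn S | col e ∈ univ.image c} := calc
    b * #A = ∑ _i : Fin b, #A := by simp
    _ ≤ ∑ i, #{e ∈ edgesIn S | col e = c i} := by
      gcongr with i
      refine (hTedges i).trans (card_le_card (filter_subset_filter _ (edgesIn_mono ?_)))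
      exact (union_subset_union_right (subset_biUnion_of_mem T (mem_univ i))).trans hS₀S
    _ = _ := sum_card_filter_eq_card_filter_mem_image hc _ _
  have hcolors := card_colorsIn_add_card_filter_mem_le col S (univ.image c)
  rw [hS] at hcolors
  have : #(univ.image c) ≤ b := card_image_le.trans (by simp)
  have := hlocal S hS
  omega

/-- Let `a, b ≥ 2` and `n ≥ a(b+1)`. In every edge coloring of `K_n` in which every
`a(b+1)`-element vertex subset spans at least `(a(b+1) choose 2) - ba + b + 1` distinct
colors, any `b` pairwise distinct colors `c₁, …, c_b`, each appearing on at least `a`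
edges, satisfy `|V_{c₁} ∩ ⋯ ∩ V_{c_b}| < a`. -/
theorem stmt13 (a b n : ℕ) (ha : 2 ≤ a) (hb : 2 ≤ b) (hn : a * (b + 1) ≤ n)
    (α : Type) [DecidableEq α] (col : Sym2 (Fin n) → α)
    (hlocal : ∀ S : Finset (Fin n), S.card = a * (b + 1) →
      (a * (b + 1)).choose 2 - b * a + b + 1 ≤ (colorsIn col S).card) :
    ∀ c : Fin b → α, Function.Injective c →
      (∀ i : Fin b, a ≤ edgeCount col (c i)) →
      (Finset.univ.filter (fun v : Fin n => ∀ i : Fin b, v ∈ colorVerts col (c i))).card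
        < a :=
  stmt13_general a b n hn α col hlocal
end
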